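/- arXiv:1711.00886 — 4 statements merged into one kernel-verified Lean document; each statement's English description precedes it below -/
import Mathlib

section
/- Let α: G ↷ X be a continuous action of a countable discrete group G on a compact metrizable space X with compatible metric d. Suppose that for every δ > 0 and ε > 0 there is a collection 𝒰 of pairwise disjoint open subsets of X such that diam(U) < δ for every U ∈ 𝒰 and μ(X \ ⋃𝒰) < ε for all μ ∈ M_G(X). Then α has the small boundary property. -/
/-!
Call an open set `V` `ε`-good if `μ (frontier V) < ε` for every invariant `μ`. The invariant
probability measures form a weak-* compact set on which `μ ↦ μ F` is upper semicontinuous for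
closed `F`, so for an `ε`-good `V` there is a single `δ > 0` such that the shell
`cthickening δ V \ V` has measure `< ε` for all invariant `μ`; every open `V'` squeezed between
`V` and `cthickening δ V` is then `ε`-good.

The hypothesis enlarges any open `V`, within any distance `η`, to an `ε'`-good open set: add to
`V` every member of a disjoint open family of diameter `< η` that meets `V`; the frontier of the
result misses the union of the family. Starting from a small ball around `x` and iterating with
`ε → 0` and radii shrinking so fast that all later enlargements stay in the shell of the current
set, the union of the resulting increasing sequence is `ε`-good for every `ε`.
-/

open MeasureTheory Set Pointwise

variable (G X : Type*)

section Defs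

variable [Group G] [MetricSpace X] [MeasurableSpace X] [MulAction G X]

/-- A Borel probability measure is `G`-invariant. -/
def InvariantMeasure (μ : ProbabilityMeasure X) : Prop :=
  ∀ g : G, MeasureTheory.Measure.map (fun x => g • x) (μ : Measure X) = (μ : Measure X)

/-- `M_G(X)`: the set of `G`-invariant Borel probability measures on `X`. -/
def MG : Set (ProbabilityMeasure X) := {μ | InvariantMeasure G X μ}

/-- `E_G(X)`: the set of ergodic `G`-invariant Borel probability measures on `X`,
i.e. invariant measures giving every `G`-invariant Borel set measure `0` or `1`. -/
def EG : Set (ProbabilityMeasure X) :=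
  {μ | InvariantMeasure G X μ ∧
    ∀ A : Set X, MeasurableSet A → (∀ g : G, g • A = A) → μ A = 0 ∨ μ A = 1}

/-- The action of `G` on `X` is free. -/
def FreeAction : Prop := ∀ (g : G) (x : X), g • x = x → g = 1

/-- The action of `G` on `X` is minimal: there is no proper nonempty closed invariant subset. -/
def MinimalAction : Prop :=
  ∀ C : Set X, IsClosed C → (∀ g : G, g • C ⊆ C) → C = ∅ ∨ C = Set.univ

/-- The small boundary property. -/
def SmallBoundaryProperty : Prop :=
  ∀ (x : X) (U : Set X), IsOpen U → x ∈ U →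
    ∃ V : Set X, IsOpen V ∧ x ∈ V ∧ V ⊆ U ∧ ∀ μ ∈ MG G X, μ (frontier V) = 0

/-- `S` is a `(K,δ)`-invariant finite subset of `G`. -/
def FolnerInv (K : Finset G) (δ : ℝ) (S : Finset G) : Prop :=
  (1 - δ) * (S.card : ℝ) ≤ ({s | s ∈ S ∧ ∀ k ∈ K, k * s ∈ S} : Set G).ncard

/-- `G` is amenable: it admits `(K,δ)`-invariant nonempty finite subsets for all `K, δ`. -/
def AmenableGroup : Prop :=
  ∀ (K : Finset G) (δ : ℝ), 0 < δ → ∃ S : Finset G, S.Nonempty ∧ FolnerInv G K δ S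

/-- `(S, V)` is a tower: the translates `s • V`, `s ∈ S`, are pairwise disjoint. -/
def IsTower (S : Finset G) (V : Set X) : Prop :=
  (S : Set G).Pairwise fun s t => Disjoint (s • V) (t • V)

/-- `F ≺_m O`: subordination with `m`-colored multiplicity. -/
def SubordinateM (m : ℕ) (F O : Set X) : Prop :=
  ∃ (n : ℕ) (U : Fin n → Set X) (s : Fin n → G) (c : Fin n → Fin (m + 1)),
    (∀ k, IsOpen (U k)) ∧ F ⊆ ⋃ k, U k ∧ (∀ k, s k • U k ⊆ O) ∧
    ∀ k l, k ≠ l → c k = c l → Disjoint (s k • U k) (s l • U l)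

/-- The action has dynamical `m`-comparison. -/
def HasMComparison (m : ℕ) : Prop :=
  ∀ F O : Set X, IsClosed F → IsOpen O →
    (∀ μ ∈ MG G X, μ F < μ O) → SubordinateM G X m F O

/-- The action is `m`-almost finite. -/
def MAlmostFinite (m : ℕ) : Prop :=
  ∀ (n : ℕ), 1 ≤ n → ∀ (K : Finset G) (δ : ℝ), 0 < δ →
    ∃ (I : ℕ) (S : Fin I → Finset G) (V : Fin I → Set X) (c : Fin I → Fin (m + 1))
      (S' : Fin I → Finset G),
      (∀ i, IsOpen (V i)) ∧
      (∀ i, IsTower G X (S i) (closure (V i))) ∧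
      (∀ i, FolnerInv G K δ (S i)) ∧
      (∀ i, ∀ s ∈ S i, Metric.diam (s • closure (V i)) < δ) ∧
      (∀ i j, i ≠ j → c i = c j →
        Disjoint ((S i : Set G) • closure (V i)) ((S j : Set G) • closure (V j))) ∧
      (∀ i, S' i ⊆ S i) ∧ (∀ i, ((S' i).card : ℝ) ≤ (S i).card / n) ∧
      SubordinateM G X 0 (Set.univ \ ⋃ i, (S i : Set G) • V i) (⋃ i, (S' i : Set G) • V i)

end Defs

open MeasureTheory Metric Filter Topology
open scoped NNReal ENNReal

theorem exists_seq_of_forall_exists_succ {α : Type*} {P : ℕ → α → Prop} {R : ℕ → α → α → Prop}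
    {a₀ : α} (h₀ : P 0 a₀) (hstep : ∀ n a, P n a → ∃ b, P (n + 1) b ∧ R n a b) :
    ∃ f : ℕ → α, f 0 = a₀ ∧ ∀ n, P n (f n) ∧ R n (f n) (f (n + 1)) := by
  choose next hnext using hstep
  let F : ∀ n, {a // P n a} := fun n =>
    Nat.rec ⟨a₀, h₀⟩ (fun n a => ⟨next n a.1 a.2, (hnext n a.1 a.2).1⟩) n
  exact ⟨fun n => (F n).1, rfl, fun n => ⟨(F n).2, (hnext n _ (F n).2).2⟩⟩

section Metric

variable {X : Type*} [PseudoMetricSpace X]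

theorem frontier_subset_cthickening_diff {V V' : Set X} {δ : ℝ} (hV' : IsOpen V')
    (hVV' : V ⊆ V') (hV'V : V' ⊆ cthickening δ V) : frontier V' ⊆ cthickening δ V \ V := by
  rw [hV'.frontier_eq]
  exact fun y hy => ⟨closure_minimal hV'V isClosed_cthickening hy.1, fun hyV => hy.2 (hVV' hyV)⟩

theorem iUnion_subset_cthickening_of_halving {V : ℕ → Set X} {r : ℕ → ℝ} (hr : ∀ n, 0 ≤ r n)
    (hhalf : ∀ n, 2 * r (n + 1) ≤ r n) (hV : Monotone V)
    (hstep : ∀ n, V (n + 1) ⊆ cthickening (r n) (V n)) (n : ℕ) :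
    ⋃ m, V m ⊆ cthickening (2 * r n) (V n) := by
  have hanti : Antitone r := antitone_nat_of_succ_le fun m => by linarith [hhalf m, hr (m + 1)]
  have key : ∀ k, V (n + k) ⊆ cthickening (2 * r n - 2 * r (n + k)) (V n) := by
    intro k
    induction k with
    | zero => simpa using subset_closure.trans (closure_subset_cthickening 0 (V n))
    | succ k ih =>
      have hk : 0 ≤ 2 * r n - 2 * r (n + k) := by linarith [hanti (n.le_add_right k)]
      calc V (n + (k + 1)) ⊆ cthickening (r (n + k)) (V (n + k)) := hstep (n + k)
        _ ⊆ cthickening (r (n + k)) (cthickening (2 * r n - 2 * r (n + k)) (V n)) :=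
          cthickening_subset_of_subset _ ih
        _ ⊆ cthickening (r (n + k) + (2 * r n - 2 * r (n + k))) (V n) :=
          cthickening_cthickening_subset (hr _) hk _
        _ ⊆ cthickening (2 * r n - 2 * r (n + k + 1)) (V n) :=
          cthickening_mono (by linarith [hhalf (n + k)]) _
  refine Set.iUnion_subset fun m => ?_
  rcases le_total n m with hnm | hmn
  · obtain ⟨k, rfl⟩ := Nat.exists_eq_add_of_le hnm
    exact (key k).trans (cthickening_mono (by linarith [hr (n + k)]) _)
  · exact (hV hmn).trans (self_subset_cthickening _)

end Metric

section StarUnion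

variable {X : Type*}

def starUnion (𝒰 : Set (Set X)) (V : Set X) : Set X :=
  V ∪ ⋃₀ {B ∈ 𝒰 | (B ∩ V).Nonempty}

variable {𝒰 : Set (Set X)} {V : Set X}

theorem subset_starUnion : V ⊆ starUnion 𝒰 V := subset_union_left

theorem subset_starUnion_of_inter_nonempty (hdisj : 𝒰.Pairwise Disjoint) {B : Set X}
    (hB : B ∈ 𝒰) (hBV : (B ∩ starUnion 𝒰 V).Nonempty) : B ⊆ starUnion 𝒰 V := by
  have hmeets : (B ∩ V).Nonempty → B ⊆ starUnion 𝒰 V := fun h =>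
    (subset_sUnion_of_mem (show B ∈ {B ∈ 𝒰 | (B ∩ V).Nonempty} from ⟨hB, h⟩)).trans
      subset_union_right
  obtain ⟨p, hpB, hpV | ⟨C, ⟨hC, hCV⟩, hpC⟩⟩ := hBV
  · exact hmeets ⟨p, hpB, hpV⟩
  · obtain rfl : B = C := hdisj.eq hB hC (not_disjoint_iff.2 ⟨p, hpB, hpC⟩)
    exact hmeets hCV

theorem starUnion_subset_cthickening [PseudoMetricSpace X] {η : ℝ}
    (hbdd : ∀ B ∈ 𝒰, Bornology.IsBounded B) (hdiam : ∀ B ∈ 𝒰, diam B ≤ η) :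
    starUnion 𝒰 V ⊆ cthickening η V := by
  refine union_subset (self_subset_cthickening V) (sUnion_subset ?_)
  rintro B ⟨hB, p, hpB, hpV⟩ y hy
  exact mem_cthickening_of_dist_le y p η V hpV
    ((dist_le_diam_of_mem (hbdd B hB) hy hpB).trans (hdiam B hB))

variable [TopologicalSpace X]

theorem IsOpen.starUnion (hV : IsOpen V) (h𝒰 : ∀ B ∈ 𝒰, IsOpen B) : IsOpen (starUnion 𝒰 V) :=
  hV.union (isOpen_sUnion fun B hB => h𝒰 B hB.1)

theorem frontier_starUnion_subset (hV : IsOpen V) (h𝒰 : ∀ B ∈ 𝒰, IsOpen B)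
    (hdisj : 𝒰.Pairwise Disjoint) : frontier (starUnion 𝒰 V) ⊆ (⋃₀ 𝒰)ᶜ := by
  rw [(hV.starUnion h𝒰).frontier_eq]
  rintro y ⟨hyc, hyW⟩ ⟨B, hB, hyB⟩
  have hBW : (B ∩ starUnion 𝒰 V).Nonempty := mem_closure_iff.1 hyc B (h𝒰 B hB) hyB
  exact hyW (subset_starUnion_of_inter_nonempty hdisj hB hBW hyB)

end StarUnion

namespace MeasureTheory.ProbabilityMeasure

theorem le_apply_iff_le_toMeasure {X : Type*} [MeasurableSpace X] (μ : ProbabilityMeasure X)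
    (s : Set X) (c : ℝ≥0) : c ≤ μ s ↔ (c : ℝ≥0∞) ≤ (μ : Measure X) s := by
  rw [← ennreal_coeFn_eq_coeFn_toMeasure, ENNReal.coe_le_coe]

variable {X : Type*} [PseudoMetricSpace X] [MeasurableSpace X] [OpensMeasurableSpace X]

theorem isClosed_setOf_le_apply {F : Set X} (hF : IsClosed F) (c : ℝ≥0) :
    IsClosed {μ : ProbabilityMeasure X | c ≤ μ F} := by
  refine isClosed_iff_forall_filter.2 fun μ L _ hLF hLμ => ?_
  have hle : ∀ᶠ ν : ProbabilityMeasure X in L, (c : ℝ≥0∞) ≤ (ν : Measure X) F :=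
    mem_of_superset (le_principal_iff.1 hLF) fun ν hν => (ν.le_apply_iff_le_toMeasure F c).1 hν
  exact (μ.le_apply_iff_le_toMeasure F c).2 <| (le_limsup_of_frequently_le' hle.frequently).trans
    (limsup_measure_closed_le_of_tendsto (μs := id) hLμ hF)

end MeasureTheory.ProbabilityMeasure

section ProbabilityMeasure

variable {X : Type*} [PseudoMetricSpace X] [MeasurableSpace X] [OpensMeasurableSpace X]

theorem tendsto_measure_cthickening_diff_interior (μ : Measure X) [IsFiniteMeasure μ]
    (V : Set X) :
    Tendsto (fun δ => μ (cthickening δ V \ interior V)) (𝓝 0) (𝓝 (μ (frontier V))) := by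
  have hint : NullMeasurableSet (interior V) μ := isOpen_interior.measurableSet.nullMeasurableSet
  rw [frontier, measure_sdiff interior_subset_closure hint (measure_ne_top _ _)]
  refine (ENNReal.Tendsto.sub (tendsto_measure_cthickening ⟨1, one_pos, measure_ne_top _ _⟩)
    tendsto_const_nhds (Or.inl (measure_ne_top _ _))).congr fun δ => ?_
  exact (measure_sdiff (interior_subset.trans (self_subset_cthickening V)) hint
    (measure_ne_top _ _)).symm

theorem IsCompact.exists_pos_forall_apply_cthickening_diff_interior_lt
    {K : Set (ProbabilityMeasure X)} (hK : IsCompact K) {V : Set X} {c : ℝ≥0}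
    (h : ∀ μ ∈ K, μ (frontier V) < c) :
    ∃ δ > 0, ∀ μ ∈ K, μ (cthickening δ V \ interior V) < c := by
  by_contra! hcon
  let t : Ioi (0 : ℝ) → Set (ProbabilityMeasure X) :=
    fun δ => {μ | c ≤ μ (cthickening δ V \ interior V)}
  have ht : Monotone t := fun δ δ' hδ μ hμ =>
    hμ.trans (μ.apply_mono (sdiff_subset_sdiff_left (cthickening_mono hδ V)))
  have hempty : K ∩ ⋂ δ, t δ = ∅ := by
    refine eq_empty_of_forall_notMem fun μ ⟨hμK, hμt⟩ => (h μ hμK).not_ge ?_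
    have hlim := (tendsto_measure_cthickening_diff_interior (μ : Measure X) V).mono_left
      (nhdsWithin_le_nhds (s := Ioi 0))
    refine (μ.le_apply_iff_le_toMeasure _ c).2 (ge_of_tendsto hlim ?_)
    filter_upwards [self_mem_nhdsWithin] with δ hδ
    exact (μ.le_apply_iff_le_toMeasure _ c).1 (mem_iInter.1 hμt ⟨δ, hδ⟩)
  obtain ⟨δ, hδ⟩ := hK.elim_directed_family_closed t
    (fun δ => ProbabilityMeasure.isClosed_setOf_le_apply
      (isClosed_cthickening.sdiff isOpen_interior) c) hempty ht.directed_ge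
  obtain ⟨μ, hμK, hμ⟩ := hcon δ δ.2
  exact hδ.subset ⟨hμK, hμ⟩

end ProbabilityMeasure

section SmallBoundary

variable {G X : Type*} [Group G] [MetricSpace X] [MeasurableSpace X] [MulAction G X]

theorem isClosed_MG [BorelSpace X] [ContinuousConstSMul G X] : IsClosed (MG G X) := by
  have hMG : MG G X = ⋂ g : G,
      {μ | μ.map (continuous_const_smul g).measurable.aemeasurable = μ} := by
    ext μ
    simp only [MG, InvariantMeasure, mem_ofPred_eq, mem_iInter]
    refine forall_congr' fun g => ?_
    rw [← ProbabilityMeasure.toMeasure_injective.eq_iff, ProbabilityMeasure.toMeasure_map]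
  rw [hMG]
  exact isClosed_iInter fun g =>
    isClosed_eq (ProbabilityMeasure.continuous_map (continuous_const_smul g)) continuous_id

variable (G X) in
def HasSmallDisjointOpenFamilies : Prop :=
  ∀ δ > (0 : ℝ), ∀ ε > (0 : ℝ), ∃ 𝒰 : Set (Set X),
    (∀ U ∈ 𝒰, IsOpen U) ∧ (∀ U ∈ 𝒰, diam U < δ) ∧ 𝒰.Pairwise Disjoint ∧
    ∀ μ ∈ MG G X, (μ (univ \ ⋃₀ 𝒰) : ℝ) < ε

namespace HasSmallDisjointOpenFamilies

variable [CompactSpace X]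

theorem exists_isOpen_superset_frontier_lt (h : HasSmallDisjointOpenFamilies G X) {V : Set X}
    (hV : IsOpen V) {η : ℝ} (hη : 0 < η) {ε : ℝ≥0} (hε : 0 < ε) :
    ∃ W, IsOpen W ∧ V ⊆ W ∧ W ⊆ cthickening η V ∧ ∀ μ ∈ MG G X, μ (frontier W) < ε := by
  obtain ⟨𝒰, hopen, hdiam, hdisj, hcompl⟩ := h η hη ε hε
  refine ⟨starUnion 𝒰 V, hV.starUnion hopen, subset_starUnion,
    starUnion_subset_cthickening (fun _ _ => isBounded_of_compactSpace)
      (fun B hB => (hdiam B hB).le), fun μ hμ => ?_⟩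
  calc μ (frontier (starUnion 𝒰 V)) ≤ μ (univ \ ⋃₀ 𝒰) := μ.apply_mono
        ((frontier_starUnion_subset hV hopen hdisj).trans (compl_eq_univ_sdiff _).subset)
    _ < ε := mod_cast hcompl μ hμ

variable [BorelSpace X] [ContinuousConstSMul G X]

theorem exists_enlargement_of_frontier_lt (h : HasSmallDisjointOpenFamilies G X) {V : Set X}
    (hV : IsOpen V) {ε ε' : ℝ≥0} (hVε : ∀ μ ∈ MG G X, μ (frontier V) < ε) (hε' : 0 < ε') {β : ℝ} (hβ : 0 < β) :
    ∃ W β', IsOpen W ∧ 0 < β' ∧ 2 * β' ≤ β ∧ V ⊆ W ∧ W ⊆ cthickening β' V ∧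
      (∀ μ ∈ MG G X, μ (frontier W) < ε') ∧
      ∀ μ ∈ MG G X, μ (cthickening (2 * β') V \ V) < ε := by
  obtain ⟨δ, hδ, hshell⟩ :=
    isClosed_MG.isCompact.exists_pos_forall_apply_cthickening_diff_interior_lt hVε
  rw [hV.interior_eq] at hshell
  have hβ' : 0 < min β δ / 2 := by positivity
  obtain ⟨W, hW, hVW, hWV, hWε⟩ := h.exists_isOpen_superset_frontier_lt hV hβ' hε'
  have h2β' : 2 * (min β δ / 2) = min β δ := by ring
  refine ⟨W, min β δ / 2, hW, hβ', h2β'.trans_le (min_le_left _ _), hVW, hWV, hWε,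
    fun μ hμ => (μ.apply_mono ?_).trans_lt (hshell μ hμ)⟩
  exact sdiff_subset_sdiff_left (cthickening_mono (h2β'.trans_le (min_le_right _ _)) V)

theorem exists_isOpen_mem_subset_closedBall_frontier_eq_zero
    (h : HasSmallDisjointOpenFamilies G X) (x : X) {r : ℝ} (hr : 0 < r) :
    ∃ V, IsOpen V ∧ x ∈ V ∧ V ⊆ closedBall x (2 * r) ∧ ∀ μ ∈ MG G X, μ (frontier V) = 0 := by
  -- States are pairs `(V n, β n)`, where `β (n + 1)` is the radius of the step from `V n` to
  -- `V (n + 1)`. The bounds `ε n` start at `2`, so that the initial ball qualifies.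
  let ε : ℕ → ℝ≥0 := fun n => 2 * 2⁻¹ ^ n
  obtain ⟨f, hf0, hf⟩ := exists_seq_of_forall_exists_succ
    (P := fun n (a : Set X × ℝ) => IsOpen a.1 ∧ 0 < a.2 ∧ ∀ μ ∈ MG G X, μ (frontier a.1) < ε n)
    (R := fun n a b => 2 * b.2 ≤ a.2 ∧ a.1 ⊆ b.1 ∧ b.1 ⊆ cthickening b.2 a.1 ∧
      ∀ μ ∈ MG G X, μ (cthickening (2 * b.2) a.1 \ a.1) < ε n)
    (a₀ := (ball x r, r))
    ⟨isOpen_ball, hr, fun μ _ => (μ.apply_le_one _).trans_lt (by norm_num [ε])⟩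
    (fun n a ⟨hV, hβ, hVε⟩ => by
      obtain ⟨W, β', hW, hβ', h2β', hVW, hWV, hWε, hshell⟩ :=
        h.exists_enlargement_of_frontier_lt hV hVε (ε' := ε (n + 1)) (by positivity) hβ
      exact ⟨(W, β'), ⟨hW, hβ', hWε⟩, h2β', hVW, hWV, hshell⟩)
  simp only [forall_and] at hf
  obtain ⟨⟨hopen, hpos, -⟩, hhalf, hmono, hstep, hshell⟩ := hf
  have hgrowth := iUnion_subset_cthickening_of_halving (V := fun n => (f n).1)
    (r := fun n => (f (n + 1)).2) (fun n => (hpos (n + 1)).le) (fun n => hhalf (n + 1))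
    (monotone_nat_of_le_succ hmono) hstep
  have hε : Tendsto ε atTop (𝓝 0) := by
    simpa only [mul_zero] using (tendsto_pow_atTop_nhds_zero_of_lt_one zero_le
      (by norm_num : (2⁻¹ : ℝ≥0) < 1)).const_mul (2 : ℝ≥0)
  have hr1 : 2 * (f 1).2 ≤ r := by simpa [hf0] using hhalf 0
  refine ⟨⋃ n, (f n).1, isOpen_iUnion hopen, mem_iUnion.2 ⟨0, hf0 ▸ mem_ball_self hr⟩, ?_,
    fun μ hμ => le_antisymm (ge_of_tendsto' hε fun n => ?_) zero_le⟩
  · calc ⋃ n, (f n).1 ⊆ cthickening (2 * (f 1).2) (f 0).1 := hgrowth 0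
      _ ⊆ cthickening r (cthickening r {x}) := by
        rw [hf0]
        exact cthickening_mono hr1 _ |>.trans (cthickening_subset_of_subset _
          (ball_subset_closedBall.trans (closedBall_subset_cthickening_singleton x r)))
      _ ⊆ cthickening (r + r) {x} := cthickening_cthickening_subset hr.le hr.le _
      _ = closedBall x (2 * r) := by
        rw [cthickening_singleton _ (by positivity : (0 : ℝ) ≤ r + r), two_mul]
  · have hfrontier := frontier_subset_cthickening_diff (isOpen_iUnion hopen)
      (subset_iUnion (fun n => (f n).1) n) (hgrowth n)
    exact ((μ.apply_mono hfrontier).trans_lt (hshell n μ hμ)).le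

end HasSmallDisjointOpenFamilies

end SmallBoundary

theorem smallBoundaryProperty_of_disjoint_open_covers_general
    {G X : Type*} [Group G]
    [MetricSpace X] [CompactSpace X]
    [MeasurableSpace X] [BorelSpace X]
    [MulAction G X] [ContinuousConstSMul G X]
    (h : ∀ δ > (0 : ℝ), ∀ ε > (0 : ℝ), ∃ 𝒰 : Set (Set X),
      (∀ U ∈ 𝒰, IsOpen U) ∧
      (∀ U ∈ 𝒰, Metric.diam U < δ) ∧
      𝒰.Pairwise Disjoint ∧
      ∀ μ ∈ MG G X, (μ (Set.univ \ ⋃₀ 𝒰) : ℝ) < ε) :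
    SmallBoundaryProperty G X := by
  intro x U hU hxU
  obtain ⟨r, hr, hrU⟩ := nhds_basis_closedBall.mem_iff.1 (hU.mem_nhds hxU)
  obtain ⟨V, hV, hxV, hVr, hV0⟩ :=
    HasSmallDisjointOpenFamilies.exists_isOpen_mem_subset_closedBall_frontier_eq_zero h x
      (half_pos hr)
  exact ⟨V, hV, hxV, hVr.trans (by rwa [mul_div_cancel₀ _ two_ne_zero]), hV0⟩

/-- If for all `δ, ε > 0` there is a collection of pairwise disjoint open sets of
diameter `< δ` whose union has complement of measure `< ε` for every invariant measure, then
the action has the small boundary property. -/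
theorem smallBoundaryProperty_of_disjoint_open_covers
    {G X : Type*} [Group G] [Countable G]
    [MetricSpace X] [CompactSpace X]
    [MeasurableSpace X] [BorelSpace X]
    [MulAction G X] [ContinuousConstSMul G X]
    (h : ∀ δ > (0 : ℝ), ∀ ε > (0 : ℝ), ∃ 𝒰 : Set (Set X),
      (∀ U ∈ 𝒰, IsOpen U) ∧
      (∀ U ∈ 𝒰, Metric.diam U < δ) ∧
      𝒰.Pairwise Disjoint ∧
      ∀ μ ∈ MG G X, (μ (Set.univ \ ⋃₀ 𝒰) : ℝ) < ε) :
    SmallBoundaryProperty G X :=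
  smallBoundaryProperty_of_disjoint_open_covers_general h
end

section
/- Let α: G ↷ X be a continuous action of a countable discrete group G on a compact metrizable space X with compatible metric d. Suppose that for every δ > 0 and ε > 0 there is a collection 𝒰 of pairwise disjoint open subsets of X such that diam(U) < δ for every U ∈ 𝒰 and μ(X \ ⋃𝒰) < ε for all μ ∈ M_G(X). Then for every closed set F ⊆ X, every open set O ⊆ X with F ⊆ O, and every ε > 0, there is an open set V with F ⊆ V ⊆ cl(V) ⊆ O and μ(∂V) < ε for all μ ∈ M_G(X). -/
open MeasureTheory Set Pointwise

variable (G X : Type*)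

/-!
Thicken `F` slightly to an open set `W`, and then add to `W` every member of the disjoint open
family `𝒰` that meets it. The result `V` is still close to `F`, because the members of `𝒰` are
small, so `closure V ⊆ O`. A point of a member `U` of `𝒰` is never on the boundary of `V`:
either `U ⊆ V` or `U` is an open set disjoint from `V`. Hence `∂V` lies outside `⋃₀ 𝒰`, which has
small measure for every invariant measure.
-/

def saturateBy {X : Type*} (𝒰 : Set (Set X)) (W : Set X) : Set X :=
  W ∪ ⋃₀ {U ∈ 𝒰 | (U ∩ W).Nonempty}

section Saturate

variable {X : Type*} {𝒰 : Set (Set X)} {W : Set X}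

lemma subset_saturateBy : W ⊆ saturateBy 𝒰 W := subset_union_left

lemma subset_saturateBy_of_mem {U : Set X} (hU : U ∈ 𝒰) (hUW : (U ∩ W).Nonempty) :
    U ⊆ saturateBy 𝒰 W :=
  (subset_sUnion_of_mem (show U ∈ {U ∈ 𝒰 | (U ∩ W).Nonempty} from ⟨hU, hUW⟩)).trans
    subset_union_right

lemma disjoint_saturateBy_of_not_nonempty (h𝒰 : 𝒰.Pairwise Disjoint) {U : Set X} (hU : U ∈ 𝒰)
    (hUW : ¬ (U ∩ W).Nonempty) : Disjoint U (saturateBy 𝒰 W) := by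
  refine disjoint_union_right.2 ⟨disjoint_iff_inter_eq_empty.2 (not_nonempty_iff_eq_empty.1 hUW),
    disjoint_sUnion_right.2 fun U' hU' => ?_⟩
  rcases eq_or_ne U U' with rfl | hne
  · exact absurd hU'.2 hUW
  · exact h𝒰 hU hU'.1 hne

variable [TopologicalSpace X]

lemma IsOpen.saturateBy (hW : IsOpen W) (h𝒰 : ∀ U ∈ 𝒰, IsOpen U) :
    IsOpen (saturateBy 𝒰 W) :=
  hW.union (isOpen_sUnion fun U hU => h𝒰 U hU.1)

lemma frontier_saturateBy_subset_compl (h𝒰 : ∀ U ∈ 𝒰, IsOpen U) (hdisj : 𝒰.Pairwise Disjoint) :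
    frontier (saturateBy 𝒰 W) ⊆ (⋃₀ 𝒰)ᶜ := by
  rintro x ⟨hcl, hint⟩ ⟨U, hU, hxU⟩
  by_cases hUW : (U ∩ W).Nonempty
  · exact hint (interior_maximal (subset_saturateBy_of_mem hU hUW) (h𝒰 U hU) hxU)
  · exact ((disjoint_saturateBy_of_not_nonempty hdisj hU hUW).closure_right
      (h𝒰 U hU)).notMem_of_mem_left hxU hcl

end Saturate

lemma saturateBy_subset_thickening {X : Type*} [PseudoMetricSpace X] [BoundedSpace X]
    {𝒰 : Set (Set X)} {W : Set X} {r : ℝ} (hr : 0 < r) (hdiam : ∀ U ∈ 𝒰, Metric.diam U < r) :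
    saturateBy 𝒰 W ⊆ Metric.thickening r W := by
  rintro x (hxW | ⟨U, ⟨hU, y, hyU, hyW⟩, hxU⟩)
  · exact Metric.self_subset_thickening hr W hxW
  · have hxy : dist x y ≤ Metric.diam U :=
      Metric.dist_le_diam_of_mem (Bornology.IsBounded.all U) hxU hyU
    exact Metric.mem_thickening_iff.2 ⟨y, hyW, hxy.trans_lt (hdiam U hU)⟩

theorem exists_open_sandwich_small_boundary_general
    {G X : Type*} [Group G]
    [MetricSpace X] [CompactSpace X]
    [MeasurableSpace X]
    [MulAction G X]
    (h : ∀ δ > (0 : ℝ), ∀ ε > (0 : ℝ), ∃ 𝒰 : Set (Set X),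
      (∀ U ∈ 𝒰, IsOpen U) ∧
      (∀ U ∈ 𝒰, Metric.diam U < δ) ∧
      𝒰.Pairwise Disjoint ∧
      ∀ μ ∈ MG G X, (μ (Set.univ \ ⋃₀ 𝒰) : ℝ) < ε)
    (F O : Set X) (hF : IsClosed F) (hO : IsOpen O) (hFO : F ⊆ O)
    (ε : ℝ) (hε : 0 < ε) :
    ∃ V : Set X, IsOpen V ∧ F ⊆ V ∧ closure V ⊆ O ∧
      ∀ μ ∈ MG G X, (μ (frontier V) : ℝ) < ε := by
  obtain ⟨δ, hδ, hδO⟩ := hF.isCompact.exists_cthickening_subset_open hO hFO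
  obtain ⟨𝒰, hopen, hdiam, hdisj, hsmall⟩ := h (δ / 2) (half_pos hδ) ε hε
  set V := saturateBy 𝒰 (Metric.thickening (δ / 2) F)
  have hVδ : V ⊆ Metric.thickening δ F := by
    calc V ⊆ Metric.thickening (δ / 2) (Metric.thickening (δ / 2) F) :=
          saturateBy_subset_thickening (half_pos hδ) hdiam
      _ ⊆ Metric.thickening (δ / 2 + δ / 2) F :=
          Metric.thickening_thickening_subset _ _ _
      _ = Metric.thickening δ F := by rw [add_halves]
  refine ⟨V, Metric.isOpen_thickening.saturateBy hopen,
    (Metric.self_subset_thickening (half_pos hδ) F).trans subset_saturateBy,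
    ((closure_mono hVδ).trans (Metric.closure_thickening_subset_cthickening δ F)).trans hδO,
    fun μ hμ => lt_of_le_of_lt ?_ (hsmall μ hμ)⟩
  rw [← compl_eq_univ_sdiff]
  exact_mod_cast μ.apply_mono (frontier_saturateBy_subset_compl hopen hdisj)

/-- Under the same hypothesis as Proposition 3.8, for every closed `F`, open
`O ⊇ F` and `ε > 0` there is an open `V` with `F ⊆ V ⊆ cl(V) ⊆ O` and `μ(∂V) < ε` for all
invariant measures `μ`. -/
theorem exists_open_sandwich_small_boundary
    {G X : Type*} [Group G] [Countable G]
    [MetricSpace X] [CompactSpace X]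
    [MeasurableSpace X] [BorelSpace X]
    [MulAction G X] [ContinuousConstSMul G X]
    (h : ∀ δ > (0 : ℝ), ∀ ε > (0 : ℝ), ∃ 𝒰 : Set (Set X),
      (∀ U ∈ 𝒰, IsOpen U) ∧
      (∀ U ∈ 𝒰, Metric.diam U < δ) ∧
      𝒰.Pairwise Disjoint ∧
      ∀ μ ∈ MG G X, (μ (Set.univ \ ⋃₀ 𝒰) : ℝ) < ε)
    (F O : Set X) (hF : IsClosed F) (hO : IsOpen O) (hFO : F ⊆ O)
    (ε : ℝ) (hε : 0 < ε) :
    ∃ V : Set X, IsOpen V ∧ F ⊆ V ∧ closure V ⊆ O ∧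
      ∀ μ ∈ MG G X, (μ (frontier V) : ℝ) < ε :=
  exists_open_sandwich_small_boundary_general h F O hF hO hFO ε hε
end

section
/- Let α: G ↷ X be a free continuous action of a countable discrete group G on a compact metrizable space X with compatible metric d, and let m ∈ ℕ. Then α is m-almost finite if and only if for every n ≥ 1, finite K ⊆ G and δ > 0 there is a finite collection of open towers {(S_i, V_i) : i ∈ I} such that each V_i is open, each S_i is (K,δ)-invariant, diam(s·V_i) < δ for every i ∈ I and s ∈ S_i, the family {S_i·V_i : i ∈ I} has chromatic number at most m+1, and there exist S'_i ⊆ S_i with |S'_i| ≤ |S_i|/n and X \ ⊔_{i∈I} S_i·V_i ≺ ⊔_{i∈I} S'_i·V_i. -/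
open MeasureTheory Set Pointwise

variable (G X : Type*)

/-!
Every condition on a tower family except the subordination of the remainder is inherited by
smaller bases, so closed towers `(S_i, cl V_i)` give open towers `(S_i, V_i)`. Conversely,
given open towers with `X \ ⋃ S_i V_i ≺ ⋃ S'_i V_i` via pieces `U_k` and translations `g_k`,
the space is covered by finitely many open sets, each carried by a group element into some
base `V_i`: the levels `s V_i`, and the sets `U_k ∩ g_k⁻¹ s V_i` for `s ∈ S'_i`. Shrinking this
cover in the normal space `X` and carrying the pieces back into the bases produces open
`W_i` with `cl W_i ⊆ V_i` for which the remainder is still subordinate.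
-/

section Shrinking

variable {G X}
variable [Group G] [MulAction G X]

theorem IsTower.mono {S : Finset G} {V W : Set X}
    (h : IsTower G X S V) (hWV : W ⊆ V) : IsTower G X S W :=
  fun _ hs _ ht hst => (h hs ht hst).mono (smul_set_mono hWV) (smul_set_mono hWV)

theorem diam_smul_lt_of_subset [PseudoMetricSpace X] [BoundedSpace X] {V W : Set X} {s : G}
    {δ : ℝ} (hWV : W ⊆ V) (h : Metric.diam (s • V) < δ) : Metric.diam (s • W) < δ :=
  (Metric.diam_mono (smul_set_mono hWV) (Bornology.IsBounded.all _)).trans_lt h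

variable [TopologicalSpace X] [NormalSpace X] [ContinuousConstSMul G X]

theorem exists_shrinking_smul_subset {ι κ : Type*} [Finite ι] {u : ι → Set X}
    (hu : ∀ a, IsOpen (u a)) (hcov : ⋃ a, u a = univ) (j : ι → κ) (h : ι → G)
    {V : κ → Set X} (huV : ∀ a, h a • u a ⊆ V (j a)) :
    ∃ v : ι → Set X, ⋃ a, v a = univ ∧ (∀ a, IsOpen (v a)) ∧ (∀ a, v a ⊆ u a) ∧
      ∃ W : κ → Set X, (∀ b, IsOpen (W b)) ∧ (∀ b, closure (W b) ⊆ V b) ∧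
        ∀ a, h a • v a ⊆ W (j a) := by
  obtain ⟨v, hv_cov, hv_open, hv_closure⟩ :=
    exists_iUnion_eq_closure_subset hu (fun _ => toFinite _) hcov
  refine ⟨v, hv_cov, hv_open, fun a => subset_closure.trans (hv_closure a),
    fun b => ⋃ (a) (_ : j a = b), h a • v a,
    fun b => isOpen_biUnion fun a _ => (hv_open a).smul (h a), fun b => ?_,
    fun a => subset_biUnion_of_mem (u := fun a => h a • v a) rfl⟩
  calc closure (⋃ (a) (_ : j a = b), h a • v a)
      ⊆ ⋃ (a) (_ : j a = b), closure (h a • v a) :=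
        closure_minimal (iUnion₂_mono fun _ _ => subset_closure)
          (isClosed_iUnion_of_finite fun _ => isClosed_iUnion_of_finite fun _ => isClosed_closure)
    _ ⊆ V b := iUnion₂_subset fun a hab => by
        rw [closure_smul, ← hab]
        exact (smul_set_mono (hv_closure a)).trans (huV a)

end Shrinking

section Subordination

variable {G X}
variable [Group G] [MetricSpace X] [MulAction G X] [ContinuousConstSMul G X]

theorem exists_closure_subset_subordinateM {ι : Type*} [Finite ι] {m : ℕ}
    {S S' : ι → Finset G} {V : ι → Set X} (hV : ∀ i, IsOpen (V i))
    (hsub : SubordinateM G X m (univ \ ⋃ i, (S i : Set G) • V i) (⋃ i, (S' i : Set G) • V i)) :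
    ∃ W : ι → Set X, (∀ i, IsOpen (W i)) ∧ (∀ i, closure (W i) ⊆ V i) ∧
      SubordinateM G X m (univ \ ⋃ i, (S i : Set G) • W i) (⋃ i, (S' i : Set G) • W i) := by
  obtain ⟨N, U, g, c, hU, hUcov, hgU, hdisj⟩ := hsub
  let u : (Σ i, S i) ⊕ (Fin N × Σ i, S' i) → Set X
    | .inl ⟨i, s⟩ => (s : G) • V i
    | .inr ⟨k, i, s⟩ => U k ∩ (g k)⁻¹ • (s : G) • V i
  let j : (Σ i, S i) ⊕ (Fin N × Σ i, S' i) → ι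
    | .inl ⟨i, _⟩ => i
    | .inr ⟨_, i, _⟩ => i
  let h : (Σ i, S i) ⊕ (Fin N × Σ i, S' i) → G
    | .inl ⟨_, s⟩ => (s : G)⁻¹
    | .inr ⟨k, _, s⟩ => (s : G)⁻¹ * g k
  have hu : ∀ a, IsOpen (u a)
    | .inl ⟨i, s⟩ => (hV i).smul _
    | .inr ⟨k, i, s⟩ => (hU k).inter (((hV i).smul _).smul _)
  have huV : ∀ a, h a • u a ⊆ V (j a)
    | .inl ⟨i, s⟩ => (inv_smul_smul _ _).subset
    | .inr ⟨k, i, s⟩ => (smul_set_mono inter_subset_right).trans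
        (by rw [mul_smul, smul_inv_smul, inv_smul_smul])
  have hcov : ⋃ a, u a = univ := by
    refine eq_univ_of_forall fun x => ?_
    by_cases hx : x ∈ ⋃ i, (S i : Set G) • V i
    · obtain ⟨i, s, hs, y, hy, rfl⟩ := mem_iUnion.mp hx
      exact mem_iUnion.mpr ⟨.inl ⟨i, s, hs⟩, smul_mem_smul_set hy⟩
    · obtain ⟨k, hk⟩ := mem_iUnion.mp (hUcov ⟨mem_univ x, hx⟩)
      obtain ⟨i, s, hs, y, hy, hxy⟩ := mem_iUnion.mp (hgU k (smul_mem_smul_set hk))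
      exact mem_iUnion.mpr ⟨.inr ⟨k, i, s, hs⟩,
        hk, mem_inv_smul_set_iff.mpr (hxy ▸ smul_mem_smul_set hy)⟩
  obtain ⟨v, hv_cov, hv_open, hvu, W, hW_open, hWV, hvW⟩ :=
    exists_shrinking_smul_subset hu hcov j h huV
  have hvU : ∀ k, ⋃ p, v (.inr (k, p)) ⊆ U k :=
    fun k => iUnion_subset fun _ => (hvu _).trans inter_subset_left
  refine ⟨W, hW_open, hWV, N, fun k => ⋃ p, v (.inr (k, p)), g, c,
    fun k => isOpen_iUnion fun _ => hv_open _, ?_, fun k => ?_, fun k l hkl hc =>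
      (hdisj k l hkl hc).mono (smul_set_mono (hvU k)) (smul_set_mono (hvU l))⟩
  · rintro x ⟨-, hx⟩
    obtain ⟨a, ha⟩ := mem_iUnion.mp (hv_cov ▸ mem_univ x)
    rcases a with ⟨i, s⟩ | ⟨k, p⟩
    · have hsx : (s : G)⁻¹ • x ∈ W i := hvW (.inl ⟨i, s⟩) (smul_mem_smul_set ha)
      exact absurd (mem_iUnion.mpr ⟨i, mem_smul.mpr ⟨s.1, s.2, _, hsx, smul_inv_smul _ _⟩⟩) hx
    · exact mem_iUnion.mpr ⟨k, mem_iUnion.mpr ⟨p, ha⟩⟩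
  · rw [smul_set_iUnion]
    refine iUnion_subset fun ⟨i, s⟩ => ?_
    rintro _ ⟨x, hx, rfl⟩
    have hsx : ((s : G)⁻¹ * g k) • x ∈ W i := hvW (.inr ⟨k, i, s⟩) (smul_mem_smul_set hx)
    exact mem_iUnion.mpr ⟨i, mem_smul.mpr ⟨s.1, s.2, _, hsx,
      by rw [smul_smul, mul_inv_cancel_left]⟩⟩

end Subordination

theorem mAlmostFinite_iff_open_towers_general
    {G X : Type*} [Group G]
    [MetricSpace X] [CompactSpace X]
    [MulAction G X] [ContinuousConstSMul G X]
    (m : ℕ) :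
    MAlmostFinite G X m ↔
      (∀ (n : ℕ), 1 ≤ n → ∀ (K : Finset G) (δ : ℝ), 0 < δ →
        ∃ (I : ℕ) (S : Fin I → Finset G) (V : Fin I → Set X) (c : Fin I → Fin (m + 1))
          (S' : Fin I → Finset G),
          (∀ i, IsOpen (V i)) ∧
          (∀ i, IsTower G X (S i) (V i)) ∧
          (∀ i, FolnerInv G K δ (S i)) ∧
          (∀ i, ∀ s ∈ S i, Metric.diam (s • V i) < δ) ∧
          (∀ i j, i ≠ j → c i = c j →
            Disjoint ((S i : Set G) • V i) ((S j : Set G) • V j)) ∧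
          (∀ i, S' i ⊆ S i) ∧ (∀ i, ((S' i).card : ℝ) ≤ ((S i).card : ℝ) / n) ∧
          SubordinateM G X 0 (Set.univ \ ⋃ i, (S i : Set G) • V i)
            (⋃ i, (S' i : Set G) • V i)) := by
  constructor
  · intro h n hn K δ hδ
    obtain ⟨I, S, V, c, S', hV, htower, hfolner, hdiam, hdisj, hS', hcard, hsub⟩ := h n hn K δ hδ
    exact ⟨I, S, V, c, S', hV, fun i => (htower i).mono subset_closure, hfolner,
      fun i s hs => diam_smul_lt_of_subset subset_closure (hdiam i s hs),
      fun i j hij hc => (hdisj i j hij hc).mono (smul_subset_smul_left subset_closure)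
        (smul_subset_smul_left subset_closure), hS', hcard, hsub⟩
  · intro h n hn K δ hδ
    obtain ⟨I, S, V, c, S', hV, htower, hfolner, hdiam, hdisj, hS', hcard, hsub⟩ := h n hn K δ hδ
    obtain ⟨W, hW, hWV, hsubW⟩ := exists_closure_subset_subordinateM hV hsub
    exact ⟨I, S, W, c, S', hW, fun i => (htower i).mono (hWV i), hfolner,
      fun i s hs => diam_smul_lt_of_subset (hWV i) (hdiam i s hs),
      fun i j hij hc => (hdisj i j hij hc).mono (smul_subset_smul_left (hWV i))
        (smul_subset_smul_left (hWV j)), hS', hcard, hsubW⟩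

/-- For a free action, `m`-almost finiteness (with closed tower levels) is
equivalent to the analogous condition in which all towers are open. -/
theorem mAlmostFinite_iff_open_towers
    {G X : Type*} [Group G] [Countable G]
    [MetricSpace X] [CompactSpace X]
    [MeasurableSpace X] [BorelSpace X]
    [MulAction G X] [ContinuousConstSMul G X]
    (hfree : FreeAction G X) (m : ℕ) :
    MAlmostFinite G X m ↔
      (∀ (n : ℕ), 1 ≤ n → ∀ (K : Finset G) (δ : ℝ), 0 < δ →
        ∃ (I : ℕ) (S : Fin I → Finset G) (V : Fin I → Set X) (c : Fin I → Fin (m + 1))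
          (S' : Fin I → Finset G),
          (∀ i, IsOpen (V i)) ∧
          (∀ i, IsTower G X (S i) (V i)) ∧
          (∀ i, FolnerInv G K δ (S i)) ∧
          (∀ i, ∀ s ∈ S i, Metric.diam (s • V i) < δ) ∧
          (∀ i j, i ≠ j → c i = c j →
            Disjoint ((S i : Set G) • V i) ((S j : Set G) • V j)) ∧
          (∀ i, S' i ⊆ S i) ∧ (∀ i, ((S' i).card : ℝ) ≤ ((S i).card : ℝ) / n) ∧
          SubordinateM G X 0 (Set.univ \ ⋃ i, (S i : Set G) • V i)
            (⋃ i, (S' i : Set G) • V i)) :=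
  mAlmostFinite_iff_open_towers_general m
end

section
/- Let α: G ↷ X be a continuous action of a countable discrete group G on a compact metrizable space X, let m ∈ ℕ, let F ⊆ X be closed, and let {(S_i, V_i) : i ∈ I} be a castle. Suppose that for each i ∈ I, S'_{i,0}, S'_{i,1}, …, S'_{i,m} are pairwise disjoint subsets of S_i all having the same cardinality. If F ≺_m ⊔_{i∈I} S'_{i,0}·V_i, then F ≺ ⊔_{i∈I} S'_i·V_i, where S'_i = ⊔_{j=0}^m S'_{i,j}. -/
open MeasureTheory Set Pointwise

variable (G X : Type*)

/-!
Fix bijections `σ_{i,j} : S'_{i,0} → S'_{i,j}`. Each open set `U` of colour `j` in a witness of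
`F ≺_m ⊔ S'_{i,0}·V_i` is cut into the pieces `U ∩ s_U⁻¹ t·V_i`, and the piece over the level `t·V_i`
is moved on by `σ_{i,j}(t) t⁻¹` to the level `σ_{i,j}(t)·V_i`. Pieces with different colours or
over different levels land in different levels of the castle, while pieces of one colour over one
level stay disjoint because their colour class was; so a single colour suffices.
-/

variable {G X}

theorem Finset.injective_equivOfCardEq_of_pairwiseDisjoint {α J : Type*} (T : J → Finset α)
    (j₀ : J) (hdisj : Pairwise fun j j' => Disjoint (T j : Set α) (T j' : Set α))
    (hcard : ∀ j, (T j₀).card = (T j).card) :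
    Function.Injective fun a : J × T j₀ => (Finset.equivOfCardEq (hcard a.1) a.2 : α) := by
  rintro ⟨j, t⟩ ⟨j', t'⟩ heq
  dsimp only at heq
  have hj : j = j' := by
    by_contra hne
    refine Set.disjoint_left.mp (hdisj hne) (Finset.equivOfCardEq (hcard j) t).2 ?_
    rw [heq]
    exact (Finset.equivOfCardEq (hcard j') t').2
  subst hj
  simpa using (Finset.equivOfCardEq (hcard j)).injective (Subtype.ext heq)

section Castle

variable [Group G] [MulAction G X]

theorem disjoint_smul_of_castle {I : Type*} {S : I → Finset G} {V : I → Set X}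
    (htower : ∀ i, IsTower G X (S i) (V i))
    (hcastle : Pairwise fun i j => Disjoint ((S i : Set G) • V i) ((S j : Set G) • V j))
    {i j : I} {s t : G} (hs : s ∈ S i) (ht : t ∈ S j) (hne : (i, s) ≠ (j, t)) :
    Disjoint (s • V i) (t • V j) := by
  by_cases hij : i = j
  · subst hij
    exact htower i hs ht fun hst => hne (hst ▸ rfl)
  · exact (hcastle hij).mono (Set.smul_set_subset_smul hs) (Set.smul_set_subset_smul ht)

end Castle

section Subordinate

variable [Group G] [MetricSpace X] [MulAction G X]

theorem subordinateM_of_finite {ι : Type*} [Finite ι] {m : ℕ} {F O : Set X} (U : ι → Set X)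
    (s : ι → G) (c : ι → Fin (m + 1)) (hU : ∀ k, IsOpen (U k)) (hFU : F ⊆ ⋃ k, U k)
    (hUO : ∀ k, s k • U k ⊆ O)
    (hUdisj : ∀ k l, k ≠ l → c k = c l → Disjoint (s k • U k) (s l • U l)) :
    SubordinateM G X m F O := by
  obtain ⟨n, ⟨e⟩⟩ := Finite.exists_equiv_fin ι
  refine ⟨n, U ∘ e.symm, s ∘ e.symm, c ∘ e.symm, fun k => hU _, ?_, fun k => hUO _,
    fun k l hkl => hUdisj _ _ (e.symm.injective.ne hkl)⟩
  exact hFU.trans (e.symm.surjective.iUnion_comp U).symm.subset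

theorem SubordinateM.subordinate_of_pairwise_disjoint_translates [ContinuousConstSMul G X]
    {ι : Type*} [Finite ι] {m : ℕ} {F O O' : Set X} (h : SubordinateM G X m F O)
    (W : ι → Set X) (hW : ∀ p, IsOpen (W p)) (hOW : O ⊆ ⋃ p, W p)
    (g : Fin (m + 1) → ι → G) (hgO' : ∀ j p, g j p • W p ⊆ O')
    (hg : Pairwise fun a b : Fin (m + 1) × ι =>
      Disjoint (g a.1 a.2 • W a.2) (g b.1 b.2 • W b.2)) :
    SubordinateM G X 0 F O' := by
  obtain ⟨n, U, s, c, hU, hFU, hUO, hUdisj⟩ := h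
  have hpiece : ∀ k p, (g (c k) p * s k) • (U k ∩ (s k)⁻¹ • W p) ⊆
      g (c k) p • (s k • U k) ∩ g (c k) p • W p := by
    intro k p
    rw [mul_smul, Set.smul_set_inter, Set.smul_set_inter, smul_inv_smul]
  refine subordinateM_of_finite (fun a : Fin n × ι => U a.1 ∩ (s a.1)⁻¹ • W a.2)
    (fun a => g (c a.1) a.2 * s a.1) (fun _ => 0) (fun a => (hU _).inter ((hW _).smul _))
    ?_ (fun a => (hpiece _ _).trans (Set.inter_subset_right.trans (hgO' _ _))) ?_
  · intro x hx
    obtain ⟨_, ⟨k, rfl⟩, hxk⟩ := hFU hx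
    obtain ⟨_, ⟨p, rfl⟩, hxp⟩ := hOW (hUO k (Set.smul_mem_smul_set hxk))
    exact Set.mem_iUnion.mpr
      ⟨(k, p), hxk, Set.mem_smul_set_iff_inv_smul_mem.mpr (by simpa using hxp)⟩
  · rintro ⟨k, p⟩ ⟨l, q⟩ hne -
    by_cases hcp : (c k, p) = (c l, q)
    · obtain ⟨hc, rfl⟩ := Prod.mk.inj hcp
      have hkl : k ≠ l := fun hkl => hne (hkl ▸ rfl)
      refine (Set.disjoint_smul_set.mpr (hUdisj k l hkl hc)).mono
        ((hpiece k p).trans Set.inter_subset_left) ?_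
      rw [hc]
      exact (hpiece l p).trans Set.inter_subset_left
    · exact (hg hcp).mono ((hpiece k p).trans Set.inter_subset_right)
        ((hpiece l q).trans Set.inter_subset_right)

end Subordinate

theorem subordinate_of_subordinateM_castle_general
    {G X : Type*} [Group G]
    [MetricSpace X]
    [MulAction G X] [ContinuousConstSMul G X]
    (m : ℕ) (F : Set X)
    (I : ℕ) (S : Fin I → Finset G) (V : Fin I → Set X)
    (hV : ∀ i, IsOpen (V i))
    (htower : ∀ i, IsTower G X (S i) (V i))
    (hcastle : ∀ i j, i ≠ j → Disjoint ((S i : Set G) • V i) ((S j : Set G) • V j))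
    (S' : Fin I → Fin (m + 1) → Finset G)
    (hsub : ∀ i j, S' i j ⊆ S i)
    (hdisj : ∀ i, ∀ j j', j ≠ j' → Disjoint (S' i j : Set G) (S' i j' : Set G))
    (hcard : ∀ i j j', (S' i j).card = (S' i j').card)
    (h : SubordinateM G X m F (⋃ i, (S' i 0 : Set G) • V i)) :
    SubordinateM G X 0 F (⋃ i, (⋃ j, (S' i j : Set G)) • V i) := by
  let ι := Σ i, S' i 0
  -- `τ j ⟨i, t⟩ = σ_{i,j}(t)` for a bijection `σ_{i,j} : S' i 0 ≃ S' i j`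
  let τ : Fin (m + 1) → ι → G := fun j p => Finset.equivOfCardEq (hcard p.1 0 j) p.2
  have hτ : ∀ j p, (τ j p * (p.2 : G)⁻¹) • ((p.2 : G) • V p.1) = τ j p • V p.1 := by
    simp [smul_smul]
  refine h.subordinate_of_pairwise_disjoint_translates (fun p : ι => (p.2 : G) • V p.1)
    (fun p => (hV _).smul _) ?_ (fun j p => τ j p * (p.2 : G)⁻¹) ?_ ?_
  · rintro x ⟨_, ⟨i, rfl⟩, t, ht, v, hv, rfl⟩
    exact Set.mem_iUnion.mpr ⟨⟨i, t, ht⟩, Set.smul_mem_smul_set hv⟩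
  · intro j p
    rw [hτ]
    exact Set.subset_iUnion_of_subset p.1
      (Set.smul_set_subset_smul (Set.mem_iUnion.mpr ⟨j, (Finset.equivOfCardEq _ _).2⟩))
  · rintro ⟨j, i, t⟩ ⟨j', i', t'⟩ hne
    simp only [hτ]
    refine disjoint_smul_of_castle htower hcastle (hsub _ _ (Finset.equivOfCardEq _ _).2)
      (hsub _ _ (Finset.equivOfCardEq _ _).2) fun heq => hne ?_
    obtain ⟨rfl, hτeq⟩ := Prod.ext_iff.mp heq
    obtain ⟨rfl, rfl⟩ := Prod.ext_iff.mp <|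
      Finset.injective_equivOfCardEq_of_pairwiseDisjoint (S' i) 0 (hdisj i) (hcard i 0)
        (a₁ := (j, t)) (a₂ := (j', t')) hτeq
    rfl

/-- If `{(S_i, V_i)}` is an open castle, the sets `S'_{i,0}, …, S'_{i,m}` are
pairwise disjoint subsets of `S_i` of equal cardinality, and `F ≺_m ⊔_i S'_{i,0} · V_i`,
then `F ≺ ⊔_i S'_i · V_i` where `S'_i = ⊔_{j=0}^m S'_{i,j}`. -/
theorem subordinate_of_subordinateM_castle
    {G X : Type*} [Group G] [Countable G]
    [MetricSpace X] [CompactSpace X]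
    [MulAction G X] [ContinuousConstSMul G X]
    (m : ℕ) (F : Set X) (hF : IsClosed F)
    (I : ℕ) (S : Fin I → Finset G) (V : Fin I → Set X)
    (hV : ∀ i, IsOpen (V i))
    (htower : ∀ i, IsTower G X (S i) (V i))
    (hcastle : ∀ i j, i ≠ j → Disjoint ((S i : Set G) • V i) ((S j : Set G) • V j))
    (S' : Fin I → Fin (m + 1) → Finset G)
    (hsub : ∀ i j, S' i j ⊆ S i)
    (hdisj : ∀ i, ∀ j j', j ≠ j' → Disjoint (S' i j : Set G) (S' i j' : Set G))
    (hcard : ∀ i j j', (S' i j).card = (S' i j').card)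
    (h : SubordinateM G X m F (⋃ i, (S' i 0 : Set G) • V i)) :
    SubordinateM G X 0 F (⋃ i, (⋃ j, (S' i j : Set G)) • V i) :=
  subordinate_of_subordinateM_castle_general m F I S V hV htower hcastle S' hsub hdisj hcard h
end
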